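/- Let d ≥ 2, let {𝒫^(b)}_{b=1}^{d+1} be a set of d+1 mutually unbiased measurements on ℂ^d with efficiency parameter κ, let ρ be a density operator on ℂ^d, and let α be a real number with 0 < α ≤ 2 and α ≠ 1. Then (1/(d+1)) Σ_{b=1}^{d+1} H_α(𝒫^(b)|ρ) ≥ ln_α((d+1)/(κ+1)). -/

import Mathlib

/-!
The vector `y_n^(b) = p_n^(b) - 1/d` is the vector of overlaps `Tr((ρ - 1/d) P_n^(b))`, and since
`Σ_n y_n^(b) = 0` it is an eigenvector of the Gram matrix `Tr(P_n^(b) P_{n'}^(b'))` with eigenvalue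
`c = (κd - 1)/(d - 1) > 0`. Expanding `0 ≤ Tr((X - Q/c)²)` for `X = ρ - 1/d`, `Q = Σ y_n^(b) P_n^(b)`
gives `Σ (y_n^(b))² ≤ c Tr X² ≤ c (1 - 1/d)`: the total collision probability `Σ_b Σ_n (p_n^(b))²`
is at most `κ + 1`.
Since `H_α(p) = Σ p ln_α(1/p)`, the averaged entropy is the mean of `x ↦ ln_α(1/x)` over the
`d(d+1)` values `p_n^(b)` weighted by `p_n^(b)/(d+1)`; this function is convex for `α ≤ 2` and
decreasing, so Jensen's inequality turns the collision bound into the entropic bound.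
-/

open Matrix Finset Real
open scoped ComplexOrder

namespace Matrix

variable {𝕜 n : Type*} [RCLike 𝕜] [Fintype n]

theorem sum_sq_le_mul_re_trace_of_gram_eigen {ι : Type*} [Fintype ι] {X : Matrix n n 𝕜}
    (hX : X.IsHermitian) {P : ι → Matrix n n 𝕜} (hP : ∀ i, (P i).IsHermitian) {y : ι → ℝ}
    {c : ℝ} (hc : 0 < c) (hXP : ∀ i, (X * P i).trace = y i)
    (hG : ∀ i, ∑ j, (y j : 𝕜) * (P i * P j).trace = c * y i) :
    ∑ i, y i ^ 2 ≤ c * RCLike.re (X * X).trace := by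
  set Q := ∑ j, (y j : 𝕜) • P j
  have hQ : Q.IsHermitian := by
    simp only [IsHermitian, Q, conjTranspose_sum, conjTranspose_smul, RCLike.star_def,
      RCLike.conj_ofReal, (hP _).eq]
  have htrQ (N : Matrix n n 𝕜) : (Q * N).trace = ∑ j, (y j : 𝕜) * (P j * N).trace := by
    simp only [Q, sum_mul, trace_sum, smul_mul, trace_smul, smul_eq_mul]
  have hXQ : (X * Q).trace = ((∑ i, y i ^ 2 : ℝ) : 𝕜) := by
    rw [trace_mul_comm, htrQ]
    simp only [trace_mul_comm (P _) X, hXP, RCLike.ofReal_sum, sq, RCLike.ofReal_mul]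
  have hQQ : (Q * Q).trace = c * ((∑ i, y i ^ 2 : ℝ) : 𝕜) := by
    simp only [htrQ, trace_mul_comm (P _) Q, trace_mul_comm (P _) (P _), hG,
      RCLike.ofReal_sum, RCLike.ofReal_pow, mul_sum]
    exact sum_congr rfl fun i _ ↦ by ring
  set M := X - (c⁻¹ : 𝕜) • Q
  have hM : Mᴴ = M := by
    simp only [M, conjTranspose_sub, conjTranspose_smul, hX.eq, hQ.eq, star_inv₀,
      RCLike.star_def, RCLike.conj_ofReal]
  have hMM : (M * M).trace = (X * X).trace - (c⁻¹ : 𝕜) * ((∑ i, y i ^ 2 : ℝ) : 𝕜) := by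
    have hc' : (c : 𝕜) ≠ 0 := RCLike.ofReal_ne_zero.2 hc.ne'
    simp only [M, sub_mul, mul_sub, smul_mul, Matrix.mul_smul, trace_sub, trace_smul, smul_eq_mul,
      trace_mul_comm Q X, hXQ, hQQ]
    field_simp
    ring
  have hpos : 0 ≤ RCLike.re (M * M).trace := by
    have h := (posSemidef_conjTranspose_mul_self M).trace_nonneg
    rw [hM] at h
    exact (RCLike.nonneg_iff.1 h).1
  rw [hMM, map_sub, ← RCLike.ofReal_inv, ← RCLike.ofReal_mul, RCLike.ofReal_re] at hpos
  rwa [sub_nonneg, inv_mul_le_iff₀ hc] at hpos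

variable [DecidableEq n]

open scoped MatrixOrder in
theorem PosSemidef.trace_mul_nonneg {A B : Matrix n n 𝕜} (hA : A.PosSemidef)
    (hB : B.PosSemidef) : 0 ≤ (A * B).trace := by
  obtain ⟨S, rfl⟩ := CStarAlgebra.nonneg_iff_eq_star_mul_self.mp hA.nonneg
  rw [mul_assoc, trace_mul_comm]
  exact (hB.mul_mul_conjTranspose_same S).trace_nonneg

theorem IsHermitian.trace_mul_self {A : Matrix n n 𝕜} (hA : A.IsHermitian) :
    (A * A).trace = ∑ i, ((hA.eigenvalues i ^ 2 : ℝ) : 𝕜) := by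
  conv_lhs => rw [hA.spectral_theorem, ← map_mul]
  rw [Unitary.conjStarAlgAut_apply, trace_mul_cycle,
    Unitary.coe_star_mul_self, one_mul, diagonal_mul_diagonal, trace_diagonal]
  simp [sq]

theorem PosSemidef.trace_mul_self_le_sq_trace {A : Matrix n n 𝕜} (hA : A.PosSemidef) :
    (A * A).trace ≤ A.trace ^ 2 := by
  rw [hA.1.trace_mul_self, hA.1.trace_eq_sum_eigenvalues, ← RCLike.ofReal_sum,
    ← RCLike.ofReal_sum, ← RCLike.ofReal_pow, RCLike.ofReal_le_ofReal]
  exact sum_sq_le_sq_sum_of_nonneg fun i _ ↦ hA.eigenvalues_nonneg i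

theorem PosSemidef.re_trace_sq_sub_smul_one_le {ρ : Matrix n n 𝕜} (hρ : ρ.PosSemidef)
    (hρtr : ρ.trace = 1) :
    RCLike.re ((ρ - (Fintype.card n : ℝ)⁻¹ • 1) * (ρ - (Fintype.card n : ℝ)⁻¹ • 1)).trace ≤
      1 - (Fintype.card n : ℝ)⁻¹ := by
  have hn : (Fintype.card n : 𝕜) ≠ 0 := by
    intro h
    have : IsEmpty n := Fintype.card_eq_zero_iff.1 (by exact_mod_cast h)
    simp [trace] at hρtr
  have hsq : RCLike.re (ρ * ρ).trace ≤ 1 := by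
    have := RCLike.re_le_re hρ.trace_mul_self_le_sq_trace
    rwa [hρtr, one_pow, RCLike.one_re] at this
  have hexp : ((ρ - (Fintype.card n : ℝ)⁻¹ • 1) * (ρ - (Fintype.card n : ℝ)⁻¹ • 1)).trace =
      (ρ * ρ).trace - (((Fintype.card n : ℝ)⁻¹ : ℝ) : 𝕜) := by
    simp only [sub_mul, mul_sub, smul_mul, Matrix.mul_smul, one_mul, mul_one, smul_smul,
      trace_sub, trace_smul, trace_one, hρtr, RCLike.real_smul_eq_coe_mul, RCLike.ofReal_inv,
      RCLike.ofReal_natCast]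
    push_cast
    field_simp
    ring
  rw [hexp, map_sub, RCLike.ofReal_re]
  linarith

end Matrix

theorem sum_sq_eq_sum_sq_sub_inv_card_add {Ω : Type*} [Fintype Ω] {p : Ω → ℝ}
    (hp₁ : ∑ k, p k = 1) :
    ∑ k, p k ^ 2 = ∑ k, (p k - (Fintype.card Ω : ℝ)⁻¹) ^ 2 + (Fintype.card Ω : ℝ)⁻¹ := by
  rcases isEmpty_or_nonempty Ω with hΩ | hΩ
  · simp at hp₁
  simp only [sub_sq, sum_add_distrib, sum_sub_distrib, ← sum_mul, ← mul_sum, hp₁, sum_const,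
    card_univ, nsmul_eq_mul]
  field_simp
  ring

theorem sum_mul_trace_mul_of_mutuallyUnbiased {β : Type*} [Fintype β] {d : ℕ} {κ : ℝ}
    {P : β → Fin d → Matrix (Fin d) (Fin d) ℂ}
    (htr2 : ∀ b b', b ≠ b' → ∀ n n', (P b n * P b' n').trace = ((1 / (d : ℝ) : ℝ) : ℂ))
    (htr3 : ∀ b n n', (P b n * P b n').trace =
      if n = n' then ((κ : ℝ) : ℂ) else (((1 - κ) / ((d : ℝ) - 1) : ℝ) : ℂ))
    {y : β → Fin d → ℝ} (hy : ∀ b, ∑ n, y b n = 0) (b : β) (n : Fin d) :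
    ∑ b', ∑ n', (y b' n' : ℂ) * (P b n * P b' n').trace =
      ((κ - (1 - κ) / ((d : ℝ) - 1) : ℝ) : ℂ) * y b n := by
  have hy' (b : β) : ∑ n, (y b n : ℂ) = 0 := by exact_mod_cast hy b
  rw [sum_eq_single_of_mem b (mem_univ b) fun b' _ hb' ↦ by
    simp only [htr2 b b' (Ne.symm hb'), ← sum_mul, hy', zero_mul]]
  have hdiag (n' : Fin d) : (P b n * P b n').trace = (((1 - κ) / ((d : ℝ) - 1) : ℝ) : ℂ) +
      if n = n' then ((κ - (1 - κ) / ((d : ℝ) - 1) : ℝ) : ℂ) else 0 := by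
    rw [htr3]
    split_ifs <;> push_cast <;> ring
  simp only [hdiag, mul_add, sum_add_distrib, ← sum_mul, hy', zero_mul, zero_add, mul_ite,
    mul_zero, sum_ite_eq, mem_univ, if_true]
  ring

theorem sum_sq_le_of_mutuallyUnbiased {β : Type*} [Fintype β] {d : ℕ} (hd : 2 ≤ d) {κ : ℝ}
    (hκ : 1 / (d : ℝ) < κ) {P : β → Fin d → Matrix (Fin d) (Fin d) ℂ}
    (hP : ∀ b n, (P b n).IsHermitian) (htr1 : ∀ b n, (P b n).trace = 1)
    (htr2 : ∀ b b', b ≠ b' → ∀ n n', (P b n * P b' n').trace = ((1 / (d : ℝ) : ℝ) : ℂ))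
    (htr3 : ∀ b n n', (P b n * P b n').trace =
      if n = n' then ((κ : ℝ) : ℂ) else (((1 - κ) / ((d : ℝ) - 1) : ℝ) : ℂ))
    {ρ : Matrix (Fin d) (Fin d) ℂ} (hρ : ρ.PosSemidef) (hρtr : ρ.trace = 1)
    {p : β → Fin d → ℝ} (hp : ∀ b n, (p b n : ℂ) = (P b n * ρ).trace)
    (hp₁ : ∀ b, ∑ n, p b n = 1) :
    ∑ b, ∑ n, p b n ^ 2 ≤ κ + (Fintype.card β - 1) / d := by
  have hd' : (2 : ℝ) ≤ d := by exact_mod_cast hd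
  have hκd : 1 < κ * d := by rwa [div_lt_iff₀ (by positivity)] at hκ
  set c := κ - (1 - κ) / ((d : ℝ) - 1) with hc_def
  have hc_eq : c = (κ * d - 1) / (d - 1) := by
    rw [hc_def]
    field_simp [show (d : ℝ) - 1 ≠ 0 by linarith]
    ring
  have hc : 0 < c := by
    rw [hc_eq]
    exact div_pos (by linarith) (by linarith)
  set y : β → Fin d → ℝ := fun b n ↦ p b n - (d : ℝ)⁻¹
  have hy (b : β) : ∑ n, y b n = 0 := by
    simp only [y, sum_sub_distrib, hp₁, sum_const, card_univ, Fintype.card_fin, nsmul_eq_mul]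
    field_simp
    ring
  set X := ρ - (d : ℝ)⁻¹ • (1 : Matrix (Fin d) (Fin d) ℂ)
  have hX : X.IsHermitian := hρ.1.sub (isHermitian_one.smul (IsSelfAdjoint.all _))
  have hXP (x : β × Fin d) : (X * P x.1 x.2).trace = (y x.1 x.2 : ℂ) := by
    simp only [X, y, sub_mul, smul_mul, one_mul, trace_sub, trace_smul, htr1, trace_mul_comm ρ,
      ← hp, Complex.real_smul, mul_one]
    push_cast
    ring
  have hG (x : β × Fin d) : ∑ x' : β × Fin d, (y x'.1 x'.2 : ℂ) * (P x.1 x.2 * P x'.1 x'.2).trace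
      = c * y x.1 x.2 := by
    rw [Fintype.sum_prod_type]
    exact sum_mul_trace_mul_of_mutuallyUnbiased htr2 htr3 hy x.1 x.2
  have hYX := Matrix.sum_sq_le_mul_re_trace_of_gram_eigen (P := fun x : β × Fin d ↦ P x.1 x.2)
    (y := fun x ↦ y x.1 x.2) hX (fun x ↦ hP x.1 x.2) hc hXP hG
  have hXX := hρ.re_trace_sq_sub_smul_one_le hρtr
  rw [Fintype.card_fin] at hXX
  have hsq : ∑ b, ∑ n, p b n ^ 2 = ∑ x : β × Fin d, y x.1 x.2 ^ 2 + Fintype.card β / d := by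
    simp only [y, fun b ↦ sum_sq_eq_sum_sq_sub_inv_card_add (hp₁ b), Fintype.card_fin,
      sum_add_distrib, Fintype.sum_prod_type, sum_const, card_univ, nsmul_eq_mul, div_eq_mul_inv]
  calc ∑ b, ∑ n, p b n ^ 2 = ∑ x : β × Fin d, y x.1 x.2 ^ 2 + Fintype.card β / d := hsq
    _ ≤ c * (1 - (d : ℝ)⁻¹) + Fintype.card β / d := by
        gcongr
        exact hYX.trans (mul_le_mul_of_nonneg_left hXX hc.le)
    _ = κ + (Fintype.card β - 1) / d := by
        rw [hc_eq]
        field_simp [show (d : ℝ) - 1 ≠ 0 by linarith]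
        ring

theorem convexOn_rpow_of_nonpos {q : ℝ} (hq : q ≤ 0) :
    ConvexOn ℝ (Set.Ioi 0) fun x : ℝ ↦ x ^ q := by
  refine ⟨convex_Ioi 0, fun x (hx : 0 < x) y (hy : 0 < y) a b ha hb hab ↦ ?_⟩
  simp only [smul_eq_mul]
  calc (a * x + b * y) ^ q ≤ (x ^ a * y ^ b) ^ q :=
        rpow_le_rpow_of_nonpos (by positivity)
          (geom_mean_le_arith_mean2_weighted ha hb hx.le hy.le hab) hq
    _ = (x ^ q) ^ a * (y ^ q) ^ b := by
        rw [mul_rpow (by positivity) (by positivity), ← rpow_mul hx.le, ← rpow_mul hx.le,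
          ← rpow_mul hy.le, ← rpow_mul hy.le, mul_comm a, mul_comm b]
    _ ≤ a * x ^ q + b * y ^ q :=
        geom_mean_le_arith_mean2_weighted ha hb (by positivity) (by positivity) hab

theorem ConvexOn.map_sum_le_of_ne_zero {ι 𝕜 E β : Type*} [Field 𝕜] [LinearOrder 𝕜]
    [IsStrictOrderedRing 𝕜] [AddCommGroup E] [AddCommGroup β] [PartialOrder β]
    [IsOrderedAddMonoid β] [Module 𝕜 E] [Module 𝕜 β] [IsStrictOrderedModule 𝕜 β]
    {s : Set E} {f : E → β} {t : Finset ι} {w : ι → 𝕜} {x : ι → E}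
    (hf : ConvexOn 𝕜 s f) (hw₀ : ∀ i ∈ t, 0 ≤ w i) (hw₁ : ∑ i ∈ t, w i = 1)
    (hx : ∀ i ∈ t, w i ≠ 0 → x i ∈ s) :
    f (∑ i ∈ t, w i • x i) ≤ ∑ i ∈ t, w i • f (x i) := by
  have hE : ∑ i ∈ t with w i ≠ 0, w i • x i = ∑ i ∈ t, w i • x i :=
    sum_filter_of_ne fun i _ h hw ↦ h (by rw [hw, zero_smul])
  have hβ : ∑ i ∈ t with w i ≠ 0, w i • f (x i) = ∑ i ∈ t, w i • f (x i) :=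
    sum_filter_of_ne fun i _ h hw ↦ h (by rw [hw, zero_smul])
  rw [← hE, ← hβ]
  exact hf.map_sum_le (fun i hi ↦ hw₀ i (mem_filter.1 hi).1)
    (by rwa [sum_filter_ne_zero]) fun i hi ↦ hx i (mem_filter.1 hi).1 (mem_filter.1 hi).2

-- `ln_α`; at `α = 1` division by zero makes it `0`, not `log`.
noncomputable def tsallisLog (α x : ℝ) : ℝ := (x ^ (1 - α) - 1) / (1 - α)

noncomputable def tsallisEntropy {ι : Type*} [Fintype ι] (α : ℝ) (p : ι → ℝ) : ℝ :=
  1 / (1 - α) * (∑ i, p i ^ α - 1)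

theorem monotoneOn_tsallisLog (α : ℝ) : MonotoneOn (tsallisLog α) (Set.Ioi 0) := by
  intro x (hx : 0 < x) y _ hxy
  rcases le_or_gt α 1 with hα | hα
  · exact div_le_div_of_nonneg_right (by gcongr) (by linarith)
  · exact div_le_div_of_nonpos_of_le (by linarith)
      (sub_le_sub_right (rpow_le_rpow_of_nonpos hx hxy (by linarith)) 1)

theorem tsallisLog_inv {α x : ℝ} (hx : 0 ≤ x) :
    tsallisLog α x⁻¹ = (1 - α)⁻¹ * x ^ (α - 1) - (1 - α)⁻¹ := by
  rw [tsallisLog, inv_rpow hx, ← rpow_neg hx, neg_sub, div_eq_inv_mul, mul_sub, mul_one]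

theorem convexOn_tsallisLog_inv {α : ℝ} (hα : α ≤ 2) :
    ConvexOn ℝ (Set.Ioi 0) fun x ↦ tsallisLog α x⁻¹ := by
  refine ConvexOn.congr ?_ fun x (hx : 0 < x) ↦ (tsallisLog_inv hx.le).symm
  refine ConvexOn.add_const ?_ _
  rcases lt_or_ge α 1 with hα1 | hα1
  · exact (convexOn_rpow_of_nonpos (by linarith)).smul (by simp only [inv_nonneg]; linarith)
  · have := ((concaveOn_rpow (p := α - 1) (by linarith) (by linarith)).subset
      Set.Ioi_subset_Ici_self (convex_Ioi 0)).neg.smul (c := -(1 - α)⁻¹)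
      (by simp only [neg_nonneg, inv_nonpos]; linarith)
    simpa only [Pi.neg_apply, smul_eq_mul, neg_mul_neg] using this

theorem mul_tsallisLog_inv {α x : ℝ} (hα : α ≠ 0) (hx : 0 ≤ x) :
    x * tsallisLog α x⁻¹ = (x ^ α - x) / (1 - α) := by
  rcases hx.eq_or_lt with rfl | hx
  · simp [zero_rpow hα]
  have hpow : x * x ^ (α - 1) = x ^ α := by
    rw [← rpow_one_add' hx.le (by simpa using hα), add_sub_cancel]
  rw [tsallisLog_inv hx.le, div_eq_inv_mul, ← hpow]
  ring

theorem tsallisEntropy_eq_sum_mul_tsallisLog_inv {ι : Type*} [Fintype ι] {α : ℝ} (hα : α ≠ 0)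
    {p : ι → ℝ} (hp₀ : ∀ i, 0 ≤ p i) (hp₁ : ∑ i, p i = 1) :
    tsallisEntropy α p = ∑ i, p i * tsallisLog α (p i)⁻¹ := by
  simp only [mul_tsallisLog_inv hα (hp₀ _), ← sum_div, sum_sub_distrib, hp₁, tsallisEntropy]
  ring

theorem tsallisLog_le_avg_tsallisEntropy {ι Ω : Type*} [Fintype ι] [Nonempty ι] [Fintype Ω]
    {α : ℝ} (hα₀ : α ≠ 0) (hα₂ : α ≤ 2) {p : ι → Ω → ℝ} (hp₀ : ∀ i k, 0 ≤ p i k)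
    (hp₁ : ∀ i, ∑ k, p i k = 1) {C : ℝ} (hC : ∑ i, ∑ k, p i k ^ 2 ≤ C) :
    tsallisLog α (Fintype.card ι / C) ≤ 1 / Fintype.card ι * ∑ i, tsallisEntropy α (p i) := by
  set N : ℝ := (Fintype.card ι : ℝ)
  have hN : 0 < N := by positivity
  have hcoll : 0 < ∑ i, ∑ k, p i k ^ 2 := by
    obtain ⟨i⟩ := ‹Nonempty ι›
    obtain ⟨k, -, hk⟩ := exists_ne_zero_of_sum_ne_zero ((hp₁ i).symm ▸ one_ne_zero)
    exact sum_pos' (fun i _ ↦ sum_nonneg fun k _ ↦ sq_nonneg _)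
      ⟨i, mem_univ _, sum_pos' (fun k _ ↦ sq_nonneg _) ⟨k, mem_univ _, by positivity⟩⟩
  have hw₁ : ∑ x : ι × Ω, p x.1 x.2 / N = 1 := by
    simp only [Fintype.sum_prod_type, ← sum_div, hp₁, sum_const, card_univ, nsmul_one]
    exact div_self hN.ne'
  calc tsallisLog α (N / C) = tsallisLog α (C / N)⁻¹ := by rw [inv_div]
    _ ≤ tsallisLog α (∑ x : ι × Ω, (p x.1 x.2 / N) • p x.1 x.2)⁻¹ := by
        have hmean : ∑ x : ι × Ω, (p x.1 x.2 / N) • p x.1 x.2 = (∑ i, ∑ k, p i k ^ 2) / N := by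
          simp only [Fintype.sum_prod_type, smul_eq_mul, sum_div]
          exact sum_congr rfl fun i _ ↦ sum_congr rfl fun k _ ↦ by ring
        rw [hmean]
        have hC₀ : 0 < C := hcoll.trans_le hC
        refine monotoneOn_tsallisLog α (Set.mem_Ioi.2 (by positivity))
          (Set.mem_Ioi.2 (by positivity)) ?_
        gcongr
    _ ≤ ∑ x : ι × Ω, (p x.1 x.2 / N) • tsallisLog α (p x.1 x.2)⁻¹ :=
        (convexOn_tsallisLog_inv hα₂).map_sum_le_of_ne_zero
          (fun x _ ↦ div_nonneg (hp₀ _ _) hN.le) hw₁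
          fun x _ hx ↦ lt_of_le_of_ne (hp₀ _ _) fun h ↦ hx (by rw [← h, zero_div])
    _ = 1 / N * ∑ i, tsallisEntropy α (p i) := by
        simp only [tsallisEntropy_eq_sum_mul_tsallisLog_inv hα₀ (hp₀ _) (hp₁ _),
          Fintype.sum_prod_type, smul_eq_mul, mul_sum]
        exact sum_congr rfl fun i _ ↦ sum_congr rfl fun k _ ↦ by ring

theorem stmt15_general (d : ℕ) (hd : 2 ≤ d) (κ : ℝ)
    (hκ1 : 1 / (d : ℝ) < κ)
    (P : Fin (d + 1) → Fin d → Matrix (Fin d) (Fin d) ℂ)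
    (hpsd : ∀ b n, (P b n).PosSemidef)
    (hsum : ∀ b, ∑ n, P b n = 1)
    (htr1 : ∀ b n, (P b n).trace = 1)
    (htr2 : ∀ b b', b ≠ b' → ∀ n n', (P b n * P b' n').trace = ((1 / (d : ℝ) : ℝ) : ℂ))
    (htr3 : ∀ b n n', (P b n * P b n').trace =
      if n = n' then ((κ : ℝ) : ℂ) else (((1 - κ) / ((d : ℝ) - 1) : ℝ) : ℂ))
    (ρ : Matrix (Fin d) (Fin d) ℂ) (hρ : ρ.PosSemidef) (hρtr : ρ.trace = 1)
    (p : Fin (d + 1) → Fin d → ℝ)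
    (hp : ∀ b n, ((p b n : ℝ) : ℂ) = (P b n * ρ).trace)
    (α : ℝ) (hα1 : 0 < α) (hα2 : α ≤ 2) :
    (1 / ((d : ℝ) + 1)) * (∑ b, ((1 / (1 - α)) * ((∑ n, (p b n) ^ α) - 1))) ≥
      (((((d : ℝ) + 1) / (κ + 1)) ^ (1 - α)) - 1) / (1 - α) := by
  have hp₀ (b : Fin (d + 1)) (n : Fin d) : 0 ≤ p b n := by
    have h := (hpsd b n).trace_mul_nonneg hρ
    rwa [← hp, Complex.zero_le_real] at h
  have hp₁ (b : Fin (d + 1)) : ∑ n, p b n = 1 := by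
    have h : ((∑ n, p b n : ℝ) : ℂ) = 1 := by
      rw [Complex.ofReal_sum]
      simp only [hp, ← trace_sum, ← sum_mul, hsum, one_mul, hρtr]
    exact_mod_cast h
  have hcoll : ∑ b, ∑ n, p b n ^ 2 ≤ κ + 1 := by
    have h := sum_sq_le_of_mutuallyUnbiased hd hκ1 (fun b n ↦ (hpsd b n).1) htr1 htr2 htr3 hρ hρtr
      hp hp₁
    rwa [Fintype.card_fin, Nat.cast_add_one, add_sub_cancel_right,
      div_self (by positivity : (d : ℝ) ≠ 0)] at h
  have h := tsallisLog_le_avg_tsallisEntropy hα1.ne' hα2 hp₀ hp₁ hcoll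
  rw [Fintype.card_fin, Nat.cast_add_one] at h
  exact h

theorem stmt15 (d : ℕ) (hd : 2 ≤ d) (κ : ℝ)
    (hκ1 : 1 / (d : ℝ) < κ) (hκ2 : κ ≤ 1)
    (P : Fin (d + 1) → Fin d → Matrix (Fin d) (Fin d) ℂ)
    (hpsd : ∀ b n, (P b n).PosSemidef)
    (hsum : ∀ b, ∑ n, P b n = 1)
    (htr1 : ∀ b n, (P b n).trace = 1)
    (htr2 : ∀ b b', b ≠ b' → ∀ n n', (P b n * P b' n').trace = ((1 / (d : ℝ) : ℝ) : ℂ))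
    (htr3 : ∀ b n n', (P b n * P b n').trace =
      if n = n' then ((κ : ℝ) : ℂ) else (((1 - κ) / ((d : ℝ) - 1) : ℝ) : ℂ))
    (ρ : Matrix (Fin d) (Fin d) ℂ) (hρ : ρ.PosSemidef) (hρtr : ρ.trace = 1)
    (p : Fin (d + 1) → Fin d → ℝ)
    (hp : ∀ b n, ((p b n : ℝ) : ℂ) = (P b n * ρ).trace)
    (α : ℝ) (hα1 : 0 < α) (hα2 : α ≤ 2) (hα3 : α ≠ 1) :
    (1 / ((d : ℝ) + 1)) * (∑ b, ((1 / (1 - α)) * ((∑ n, (p b n) ^ α) - 1))) ≥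
      (((((d : ℝ) + 1) / (κ + 1)) ^ (1 - α)) - 1) / (1 - α) :=
  stmt15_general d hd κ hκ1 P hpsd hsum htr1 htr2 htr3 ρ hρ hρtr p hp α hα1 hα2
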